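/- Let U be a nonempty finite type, let X take values in {A,B}, and let Q take values in {qA, qB, qAB}. Let p be a joint pmf of (U,X,Q) with P(U=u)>0 for every u, satisfying decodability (P(X=A, Q=qB)=0 and P(X=B, Q=qA)=0) and privacy (Q independent of U). Then for each x ∈ {A,B}, the probability of the singleton query for x satisfies P(Q = {x}) ≤ min over u of P(X=x | U=u). -/

import Mathlib

/-!
By decodability, on the event `Q = {x}` only `X = x` carries mass, so
`P(U = u, Q = {x}) ≤ P(U = u, X = x)`; by privacy the left side is `P(U = u) P(Q = {x})`.
Dividing by `P(U = u) > 0` gives the bound for every `u`.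
-/

/-- The two sources. -/
inductive Src | A | B
deriving DecidableEq

instance : Fintype Src :=
  ⟨{Src.A, Src.B}, fun x => by cases x <;> simp⟩

/-- The three possible queries: only source A, only source B, or both. -/
inductive Qry | qA | qB | qAB
deriving DecidableEq

instance : Fintype Qry :=
  ⟨{Qry.qA, Qry.qB, Qry.qAB}, fun q => by cases q <;> simp⟩

/-- The singleton query associated to a source. -/
def singletonQ : Src → Qry
  | Src.A => Qry.qA
  | Src.B => Qry.qB

section Decodable

variable {U : Type} [Fintype U] (p : U → Src → Qry → ℝ)

lemma mass_singletonQ_eq_zero_of_ne (hnn : ∀ u x q, 0 ≤ p u x q)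
    (hdecA : ∑ u, p u Src.A Qry.qB = 0) (hdecB : ∑ u, p u Src.B Qry.qA = 0)
    {x x' : Src} (hx : x' ≠ x) (u : U) : p u x' (singletonQ x) = 0 := by
  have hA := congrFun ((Fintype.sum_eq_zero_iff_of_nonneg fun u => hnn u _ _).1 hdecA) u
  have hB := congrFun ((Fintype.sum_eq_zero_iff_of_nonneg fun u => hnn u _ _).1 hdecB) u
  cases x <;> cases x' <;> first | exact absurd rfl hx | assumption

lemma sum_mass_singletonQ (hnn : ∀ u x q, 0 ≤ p u x q)
    (hdecA : ∑ u, p u Src.A Qry.qB = 0) (hdecB : ∑ u, p u Src.B Qry.qA = 0)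
    (u : U) (x : Src) : ∑ x', p u x' (singletonQ x) = p u x (singletonQ x) :=
  Finset.sum_eq_single x (fun _ _ hx => mass_singletonQ_eq_zero_of_ne p hnn hdecA hdecB hx u)
    (by simp)

end Decodable

theorem singleton_query_bound_general {U : Type} [Fintype U] [Nonempty U]
    (p : U → Src → Qry → ℝ)
    (hnn : ∀ u x q, 0 ≤ p u x q)
    (hUpos : ∀ u, 0 < ∑ x, ∑ q, p u x q)
    (hdecA : ∑ u, p u Src.A Qry.qB = 0)
    (hdecB : ∑ u, p u Src.B Qry.qA = 0)
    (hpriv : ∀ u q, ∑ x, p u x q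
      = (∑ x, ∑ q', p u x q') * (∑ u', ∑ x, p u' x q)) :
    ∀ x : Src, (∑ u, ∑ x', p u x' (singletonQ x))
      ≤ Finset.univ.inf' Finset.univ_nonempty
          (fun u => (∑ q, p u x q) / (∑ x', ∑ q, p u x' q)) := by
  intro x
  refine Finset.le_inf' _ _ fun u _ => ?_
  rw [le_div_iff₀ (hUpos u), mul_comm, ← hpriv u, sum_mass_singletonQ p hnn hdecA hdecB]
  exact Finset.single_le_sum (fun q _ => hnn u x q) (Finset.mem_univ _)

/-- Under decodability and privacy, the probability of the singleton query for `x` is at most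
`π(x) = min_u P(X=x | U=u)`. -/
theorem singleton_query_bound {U : Type} [Fintype U] [Nonempty U]
    (p : U → Src → Qry → ℝ)
    (hnn : ∀ u x q, 0 ≤ p u x q)
    (hsum : ∑ u, ∑ x, ∑ q, p u x q = 1)
    (hUpos : ∀ u, 0 < ∑ x, ∑ q, p u x q)
    (hdecA : ∑ u, p u Src.A Qry.qB = 0)
    (hdecB : ∑ u, p u Src.B Qry.qA = 0)
    (hpriv : ∀ u q, ∑ x, p u x q
      = (∑ x, ∑ q', p u x q') * (∑ u', ∑ x, p u' x q)) :
    ∀ x : Src, (∑ u, ∑ x', p u x' (singletonQ x))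
      ≤ Finset.univ.inf' Finset.univ_nonempty
          (fun u => (∑ q, p u x q) / (∑ x', ∑ q, p u x' q)) :=
  singleton_query_bound_general p hnn hUpos hdecA hdecB hpriv
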